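/- Let 𝓕 be a finite family of distinct sets with levels 𝓕₁, …, 𝓕_t and auxiliary graph H, and let α be the size of the largest union-free subfamily of 𝓕. If a₁ < a₂ < ⋯ < a_k are the vertices of an independent set in H and (b, a₁) is an edge of H with b < a₁, then Σ_{j=1}^{k} |𝓕_{a_j}| ≤ α − 2(a₁ − b) + 1. -/

import Mathlib

open scoped Classical in
/-- The maximal (by inclusion) sets of a family. -/
noncomputable def maxSets (G : Finset (Finset ℕ)) : Finset (Finset ℕ) :=
  G.filter fun X => ∀ Y ∈ G, ¬ X ⊂ Y

/-- `rem F k` is what remains of the family `F` after `k` rounds of peeling off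
the maximal sets. -/
noncomputable def rem (F : Finset (Finset ℕ)) : ℕ → Finset (Finset ℕ)
  | 0 => F
  | k + 1 => rem F k \ maxSets (rem F k)

open scoped Classical in
/-- The length `t` of the longest chain (under inclusion) in the family `F`. -/
noncomputable def famHeight (F : Finset (Finset ℕ)) : ℕ :=
  (Finset.filter (fun C : Finset (Finset ℕ) => IsChain (· ⊆ ·) (C : Set (Finset ℕ))) F.powerset).sup Finset.card

/-- The `i`-th level `𝓕ᵢ` of the family `F`: with `t = famHeight F`,
`𝓕_t` is the family of maximal sets of `F` and, downwards, `𝓕ᵢ` is the family of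
maximal sets of `F \ (𝓕_{i+1} ∪ ⋯ ∪ 𝓕_t)`.  A set has *rank* `i` if it lies in
`level F i`. -/
noncomputable def level (F : Finset (Finset ℕ)) (i : ℕ) : Finset (Finset ℕ) :=
  maxSets (rem F (famHeight F - i))

/-- The auxiliary graph `H = H(F)` on the vertex set `{1, …, t}`, `t = famHeight F`:
the pair `(i, i')` with `i < i'` is an edge if there exist two disjoint chains
`X` and `Y`, each consisting of exactly one set of each rank `j` for `i ≤ j ≤ i' - 1`,
such that at most one set in `{X j ∪ Y k}` has rank `i'` and every other set of this
form has rank greater than `i'` or does not belong to `F`. -/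
def HEdge (F : Finset (Finset ℕ)) (i i' : ℕ) : Prop :=
  1 ≤ i ∧ i < i' ∧ i' ≤ famHeight F ∧
  ∃ X Y : ℕ → Finset ℕ,
    (∀ j, i ≤ j → j < i' → X j ∈ level F j) ∧
    (∀ j, i ≤ j → j < i' → Y j ∈ level F j) ∧
    (∀ j k, i ≤ j → j < k → k < i' → X j ⊂ X k) ∧
    (∀ j k, i ≤ j → j < k → k < i' → Y j ⊂ Y k) ∧
    (∀ j k, i ≤ j → j < i' → i ≤ k → k < i' → X j ≠ Y k) ∧
    (∀ j k, i ≤ j → j < i' → i ≤ k → k < i' →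
      X j ∪ Y k ∉ F ∨ X j ∪ Y k ∈ level F i' ∨
        ∃ r, i' < r ∧ r ≤ famHeight F ∧ X j ∪ Y k ∈ level F r) ∧
    (∀ j₁ k₁ j₂ k₂, i ≤ j₁ → j₁ < i' → i ≤ k₁ → k₁ < i' →
      i ≤ j₂ → j₂ < i' → i ≤ k₂ → k₂ < i' →
      X j₁ ∪ Y k₁ ∈ level F i' → X j₂ ∪ Y k₂ ∈ level F i' →
      X j₁ ∪ Y k₁ = X j₂ ∪ Y k₂)

/-- A family of sets is *union-free* if there are no three distinct sets
`X, Y, Z` in the family with `X ∪ Y = Z`. -/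
def UnionFree (F : Finset (Finset ℕ)) : Prop :=
  ∀ X ∈ F, ∀ Y ∈ F, ∀ Z ∈ F, X ≠ Y → X ≠ Z → Y ≠ Z → X ∪ Y ≠ Z

/-!
Take the levels indexed by `I` together with the two chains `𝓧`, `𝓨` witnessing the edge
`(b, a₁)`, and discard the (at most one) set of rank `a₁` of the form `X ∪ Y`. What is left has
at least `∑ |𝓕_{a_j}| + 2(a₁ - b) - 1` members, and it is union-free. Indeed, if `A ∪ B = C`
with `A`, `B` of rank at most `i` and `C` of rank greater than `i`, then extending `A` and `B`
upwards through consecutive levels gives two chains all of whose pairwise unions contain `C`, so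
have rank at least that of `C`, with equality only for `C` itself: `(i, rank C)` is an edge
of `H`. Taking `i = max (rank A) (rank B)`, or `i = a₁` when `A` and `B` lie on different
chains (then `C`, not being the discarded set, has rank above `a₁`), this contradicts the
independence of `I`; two sets on the same chain are comparable.
-/

open Finset

section Levels

variable {F G : Finset (Finset ℕ)} {A C W : Finset ℕ} {i r : ℕ}

lemma mem_maxSets : W ∈ maxSets G ↔ W ∈ G ∧ ∀ Y ∈ G, ¬ W ⊂ Y := by
  classical
  simp [maxSets]

lemma maxSets_subset : maxSets G ⊆ G := filter_subset _ _

lemma exists_mem_maxSets_superset (hW : W ∈ G) : ∃ V ∈ maxSets G, W ⊆ V := by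
  obtain ⟨V, hWV, hV⟩ := G.exists_le_maximal hW
  exact ⟨V, mem_maxSets.2 ⟨hV.prop, fun Y hY => hV.not_gt hY⟩, hWV⟩

lemma mem_rem_succ {k : ℕ} : W ∈ rem F (k + 1) ↔ W ∈ rem F k ∧ ∃ V ∈ rem F k, W ⊂ V := by
  rw [rem, mem_sdiff, mem_maxSets]
  grind

lemma rem_antitone : Antitone (rem F) :=
  antitone_nat_of_succ_le fun _ => sdiff_subset

lemma level_subset : level F i ⊆ F :=
  maxSets_subset.trans (rem_antitone (Nat.zero_le _))

lemma exists_chain_of_mem_rem (k : ℕ) :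
    ∀ W ∈ rem F k, ∃ C ⊆ F, IsChain (· ⊆ ·) (C : Set (Finset ℕ)) ∧ (∀ V ∈ C, W ⊆ V) ∧
      #C = k + 1 := by
  induction k with
  | zero => exact fun W hW => ⟨{W}, singleton_subset_iff.2 hW, by simp, by simp, rfl⟩
  | succ k ih =>
    intro W hW
    obtain ⟨hWk, U, hU, hWU⟩ := mem_rem_succ.1 hW
    obtain ⟨C, hCF, hC, hUC, hCcard⟩ := ih U hU
    have hWC : W ∉ C := fun h => hWU.not_subset (hUC W h)
    refine ⟨insert W C, insert_subset (rem_antitone (Nat.zero_le _) hWk) hCF, ?_, ?_, ?_⟩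
    · rw [coe_insert]
      exact hC.insert fun V hV _ => Or.inl (hWU.subset.trans (hUC V hV))
    · exact (forall_mem_insert _ _ _).2 ⟨subset_rfl, fun V hV => hWU.subset.trans (hUC V hV)⟩
    · rw [card_insert_of_notMem hWC, hCcard]

lemma lt_famHeight_of_mem_rem {k : ℕ} (hW : W ∈ rem F k) : k < famHeight F := by
  classical
  obtain ⟨C, hCF, hC, -, hCcard⟩ := exists_chain_of_mem_rem k W hW
  have : #C ≤ famHeight F := le_sup (mem_filter.2 ⟨mem_powerset.2 hCF, hC⟩)
  omega

lemma exists_mem_level (hW : W ∈ F) : ∃ r ≤ famHeight F, W ∈ level F r := by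
  by_contra! h
  have hrem : ∀ k, W ∈ rem F k := by
    intro k
    induction k with
    | zero => exact hW
    | succ k ih =>
      have hk := lt_famHeight_of_mem_rem ih
      have := h (famHeight F - k) (Nat.sub_le _ _)
      rw [level, Nat.sub_sub_self hk.le] at this
      exact mem_sdiff.2 ⟨ih, this⟩
  exact lt_irrefl _ (lt_famHeight_of_mem_rem (hrem (famHeight F)))

lemma level_lt_of_ssubset (hA : A ∈ level F i) (hC : C ∈ level F r) (h : A ⊂ C) : i < r := by
  by_contra! hri
  have : C ∈ rem F (famHeight F - i) := rem_antitone (by omega) (maxSets_subset hC)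
  exact (mem_maxSets.1 hA).2 C this h

-- The bound on `i` is needed: `level F i = maxSets F` for all `i ≥ famHeight F`.
lemma level_le_of_subset (hA : A ∈ level F i) (hC : C ∈ level F r) (hi : i ≤ famHeight F)
    (h : A ⊆ C) : i ≤ r := by
  obtain rfl | h := h.eq_or_ssubset
  · by_contra! hri
    have : A ∈ rem F (famHeight F - i + 1) := rem_antitone (by omega) (maxSets_subset hC)
    exact (mem_sdiff.1 this).2 hA
  · exact (level_lt_of_ssubset hA hC h).le

lemma eq_of_mem_level {j : ℕ} (hi : W ∈ level F i) (hj : W ∈ level F j)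
    (hit : i ≤ famHeight F) (hjt : j ≤ famHeight F) : i = j :=
  (level_le_of_subset hi hj hit subset_rfl).antisymm (level_le_of_subset hj hi hjt subset_rfl)

lemma exists_ssuperset_mem_level_succ (hW : W ∈ level F r) (hr : r + 1 ≤ famHeight F) :
    ∃ V ∈ level F (r + 1), W ⊂ V := by
  have hk : famHeight F - r = famHeight F - (r + 1) + 1 := by omega
  have hW' := maxSets_subset hW
  rw [hk, mem_rem_succ] at hW'
  obtain ⟨-, U, hU, hWU⟩ := hW'
  obtain ⟨V, hV, hUV⟩ := exists_mem_maxSets_superset hU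
  exact ⟨V, hV, hWU.trans_subset hUV⟩

lemma exists_chain_above (hW : W ∈ level F r) (n : ℕ) (hn : r + n ≤ famHeight F) :
    ∃ g : ℕ → Finset ℕ, g r = W ∧ (∀ j ∈ Set.Icc r (r + n), g j ∈ level F j) ∧
      StrictMonoOn g (Set.Icc r (r + n)) := by
  induction n with
  | zero =>
    refine ⟨fun _ => W, rfl, fun j ⟨hj, hj'⟩ => ?_, ?_⟩
    · rwa [show j = r by omega]
    · rw [add_zero, Set.Icc_self]
      exact Set.strictMonoOn_singleton _
  | succ n ih =>
    obtain ⟨g, hgr, hg, hgmono⟩ := ih (by omega)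
    obtain ⟨V, hV, hgV⟩ :=
      exists_ssuperset_mem_level_succ (hg (r + n) ⟨by omega, le_rfl⟩) (by omega)
    refine ⟨Function.update g (r + n + 1) V,
      by rw [Function.update_of_ne (by omega), hgr], fun j ⟨hj, hj'⟩ => ?_, ?_⟩
    · obtain rfl | hjn := eq_or_ne j (r + n + 1)
      · simpa using hV
      · rw [Function.update_of_ne hjn]
        exact hg j ⟨hj, by omega⟩
    · refine strictMonoOn_of_lt_succ Set.ordConnected_Icc fun j _ ⟨hj, _⟩ hj1 => ?_
      rw [Order.succ_eq_add_one] at hj1 ⊢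
      obtain hjn | hjn := eq_or_ne (j + 1) (r + n + 1)
      · rw [hjn, Function.update_self, Function.update_of_ne (by omega),
          show j = r + n by omega]
        exact hgV
      · have : j + 1 ≤ r + n := by have := hj1.2; omega
        rw [Function.update_of_ne hjn, Function.update_of_ne (by omega)]
        exact hgmono ⟨hj, by omega⟩ ⟨by omega, this⟩ (Nat.lt_succ_self j)

lemma exists_chain_through (hW : W ∈ level F r) {i i' : ℕ} (hri : r ≤ i) (hii' : i < i')
    (hi' : i' ≤ famHeight F) :
    ∃ g : ℕ → Finset ℕ, StrictMonoOn g (Set.Ico i i') ∧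
      ∀ j ∈ Set.Ico i i', g j ∈ level F j ∧ W ⊆ g j := by
  obtain ⟨g, hgr, hg, hgmono⟩ := exists_chain_above hW (i' - 1 - r) (by omega)
  have hIco : Set.Ico i i' ⊆ Set.Icc r (r + (i' - 1 - r)) :=
    fun j ⟨hj, hj'⟩ => ⟨by omega, by omega⟩
  refine ⟨g, hgmono.mono hIco, fun j hj => ⟨hg j (hIco hj), ?_⟩⟩
  rw [← hgr]
  exact hgmono.monotoneOn ⟨le_rfl, Nat.le_add_right _ _⟩ (hIco hj) (hri.trans hj.1)

end Levels

structure EdgeChains (F : Finset (Finset ℕ)) (i i' : ℕ) (X Y : ℕ → Finset ℕ) : Prop where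
  left_mem_level : ∀ j ∈ Set.Ico i i', X j ∈ level F j
  right_mem_level : ∀ j ∈ Set.Ico i i', Y j ∈ level F j
  strictMonoOn_left : StrictMonoOn X (Set.Ico i i')
  strictMonoOn_right : StrictMonoOn Y (Set.Ico i i')
  left_ne_right : ∀ j ∈ Set.Ico i i', ∀ k ∈ Set.Ico i i', X j ≠ Y k
  union_mem_level : ∀ j ∈ Set.Ico i i', ∀ k ∈ Set.Ico i i', X j ∪ Y k ∈ F →
    X j ∪ Y k ∈ level F i' ∨ ∃ r, i' < r ∧ r ≤ famHeight F ∧ X j ∪ Y k ∈ level F r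
  union_eq_of_mem_level : ∀ j₁ ∈ Set.Ico i i', ∀ k₁ ∈ Set.Ico i i',
    ∀ j₂ ∈ Set.Ico i i', ∀ k₂ ∈ Set.Ico i i',
    X j₁ ∪ Y k₁ ∈ level F i' → X j₂ ∪ Y k₂ ∈ level F i' → X j₁ ∪ Y k₁ = X j₂ ∪ Y k₂

section Edges

variable {F : Finset (Finset ℕ)}

lemma hEdge_iff {i i' : ℕ} :
    HEdge F i i' ↔ 1 ≤ i ∧ i < i' ∧ i' ≤ famHeight F ∧ ∃ X Y, EdgeChains F i i' X Y := by
  constructor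
  · rintro ⟨h1, h2, h3, X, Y, hX, hY, hXm, hYm, hne, hun, huq⟩
    exact ⟨h1, h2, h3, X, Y,
      { left_mem_level := fun j hj => hX j hj.1 hj.2
        right_mem_level := fun j hj => hY j hj.1 hj.2
        strictMonoOn_left := fun j hj k hk hjk => hXm j k hj.1 hjk hk.2
        strictMonoOn_right := fun j hj k hk hjk => hYm j k hj.1 hjk hk.2
        left_ne_right := fun j hj k hk => hne j k hj.1 hj.2 hk.1 hk.2
        union_mem_level := fun j hj k hk hF =>
          (hun j k hj.1 hj.2 hk.1 hk.2).resolve_left (not_not.2 hF)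
        union_eq_of_mem_level := fun j₁ hj₁ k₁ hk₁ j₂ hj₂ k₂ hk₂ =>
          huq j₁ k₁ j₂ k₂ hj₁.1 hj₁.2 hk₁.1 hk₁.2 hj₂.1 hj₂.2 hk₂.1 hk₂.2 }⟩
  · rintro ⟨h1, h2, h3, X, Y, h⟩
    refine ⟨h1, h2, h3, X, Y, fun j hj hj' => h.left_mem_level j ⟨hj, hj'⟩,
      fun j hj hj' => h.right_mem_level j ⟨hj, hj'⟩,
      fun j k hj hjk hk => h.strictMonoOn_left ⟨hj, by omega⟩ ⟨by omega, hk⟩ hjk,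
      fun j k hj hjk hk => h.strictMonoOn_right ⟨hj, by omega⟩ ⟨by omega, hk⟩ hjk,
      fun j k hj hj' hk hk' => h.left_ne_right j ⟨hj, hj'⟩ k ⟨hk, hk'⟩,
      fun j k hj hj' hk hk' => or_iff_not_imp_left.2 fun hF =>
        h.union_mem_level j ⟨hj, hj'⟩ k ⟨hk, hk'⟩ (not_not.1 hF),
      fun j₁ k₁ j₂ k₂ hj₁ hj₁' hk₁ hk₁' hj₂ hj₂' hk₂ hk₂' =>
        h.union_eq_of_mem_level j₁ ⟨hj₁, hj₁'⟩ k₁ ⟨hk₁, hk₁'⟩ j₂ ⟨hj₂, hj₂'⟩ k₂ ⟨hk₂, hk₂'⟩⟩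

lemma hEdge_of_union_eq {A B C : Finset ℕ} {iA iB iC i : ℕ} (hA : A ∈ level F iA)
    (hB : B ∈ level F iB) (hC : C ∈ level F iC) (hABC : A ∪ B = C) (hi : 1 ≤ i)
    (hiA : iA ≤ i) (hiB : iB ≤ i) (hiC : i < iC) (hCt : iC ≤ famHeight F) :
    HEdge F i iC := by
  obtain ⟨gA, hgA_mono, hgA⟩ := exists_chain_through hA hiA hiC hCt
  obtain ⟨gB, hgB_mono, hgB⟩ := exists_chain_through hB hiB hiC hCt
  have hC_sub : ∀ j ∈ Set.Ico i iC, ∀ k ∈ Set.Ico i iC, C ⊆ gA j ∪ gB k :=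
    fun j hj k hk => hABC ▸ union_subset_union (hgA j hj).2 (hgB k hk).2
  have hC_eq : ∀ j ∈ Set.Ico i iC, ∀ k ∈ Set.Ico i iC, gA j ∪ gB k ∈ level F iC →
      gA j ∪ gB k = C := fun j hj k hk hU =>
    ((hC_sub j hj k hk).eq_or_ssubset.resolve_right
      fun h => (level_lt_of_ssubset hC hU h).false).symm
  refine hEdge_iff.2 ⟨hi, hiC, hCt, gA, gB,
    { left_mem_level := fun j hj => (hgA j hj).1
      right_mem_level := fun j hj => (hgB j hj).1
      strictMonoOn_left := hgA_mono
      strictMonoOn_right := hgB_mono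
      left_ne_right := fun j hj k hk heq => ?_
      union_mem_level := fun j hj k hk hF => ?_
      union_eq_of_mem_level := fun j₁ hj₁ k₁ hk₁ j₂ hj₂ k₂ hk₂ h₁ h₂ => ?_ }⟩
  · have hC_le := hC_sub j hj k hk
    rw [heq, union_self] at hC_le
    exact (level_le_of_subset hC (hgB k hk).1 hCt hC_le).not_gt hk.2
  · obtain ⟨r, hrt, hr⟩ := exists_mem_level hF
    obtain rfl | hlt := (level_le_of_subset hC hr hCt (hC_sub j hj k hk)).eq_or_lt
    · exact Or.inl hr
    · exact Or.inr ⟨r, hlt, hrt, hr⟩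
  · rw [hC_eq j₁ hj₁ k₁ hk₁ h₁, hC_eq j₂ hj₂ k₂ hk₂ h₂]

end Edges

lemma union_eq_left_or_right_of_mem_image {ι α : Type*} [LinearOrder ι] [DecidableEq ι]
    [DecidableEq α] {s : Finset ι} {Z : ι → Finset α} (hZ : MonotoneOn Z s) {A B : Finset α}
    (hA : A ∈ s.image Z) (hB : B ∈ s.image Z) : A ∪ B = A ∨ A ∪ B = B := by
  obtain ⟨p, hp, rfl⟩ := mem_image.1 hA
  obtain ⟨q, hq, rfl⟩ := mem_image.1 hB
  rcases le_total p q with h | h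
  · exact Or.inr (union_eq_right.2 (hZ hp hq h))
  · exact Or.inl (union_eq_left.2 (hZ hq hp h))

section Family

variable {F : Finset (Finset ℕ)} {I : Finset ℕ} {a b : ℕ} {X Y : ℕ → Finset ℕ}

lemma EdgeChains.lt_of_mem_image₂ (hXY : EdgeChains F b a X Y) {C : Finset ℕ} {r : ℕ}
    (hC : C ∈ image₂ (· ∪ ·) ((Ico b a).image X) ((Ico b a).image Y)) (hCa : C ∉ level F a)
    (hCr : C ∈ level F r) (hr : r ≤ famHeight F) : a < r := by
  obtain ⟨_, hA, _, hB, rfl⟩ := mem_image₂.1 hC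
  obtain ⟨p, hp, rfl⟩ := mem_image.1 hA
  obtain ⟨q, hq, rfl⟩ := mem_image.1 hB
  rcases hXY.union_mem_level p (mem_Ico.1 hp) q (mem_Ico.1 hq) (level_subset hCr)
    with h | ⟨r', har', hr't, hr'⟩
  · exact absurd h hCa
  · rwa [eq_of_mem_level hCr hr' hr hr't]

lemma EdgeChains.exists_mem_level_of_mem_chains (hXY : EdgeChains F b a X Y) {W : Finset ℕ}
    (hW : W ∈ (Ico b a).image X ∪ (Ico b a).image Y) : ∃ p ∈ Set.Ico b a, W ∈ level F p := by
  rcases mem_union.1 hW with hWX | hWY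
  · obtain ⟨p, hp, rfl⟩ := mem_image.1 hWX
    exact ⟨p, mem_Ico.1 hp, hXY.left_mem_level p (mem_Ico.1 hp)⟩
  · obtain ⟨p, hp, rfl⟩ := mem_image.1 hWY
    exact ⟨p, mem_Ico.1 hp, hXY.right_mem_level p (mem_Ico.1 hp)⟩

lemma exists_level_of_mem_levels_union_chains (hI : I ⊆ Icc 1 (famHeight F)) (ha : a ∈ I)
    (hamin : ∀ x ∈ I, a ≤ x) (hXY : EdgeChains F b a X Y) {W : Finset ℕ}
    (hW : W ∈ I.biUnion (level F) ∪ ((Ico b a).image X ∪ (Ico b a).image Y)) :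
    ∃ r ≤ famHeight F, W ∈ level F r ∧ (a ≤ r → r ∈ I) ∧
      (r < a → W ∈ (Ico b a).image X ∪ (Ico b a).image Y) := by
  have hat := (mem_Icc.1 (hI ha)).2
  rcases mem_union.1 hW with hWI | hWch
  · obtain ⟨r, hr, hWr⟩ := mem_biUnion.1 hWI
    have := hamin r hr
    exact ⟨r, (mem_Icc.1 (hI hr)).2, hWr, fun _ => hr, by omega⟩
  · obtain ⟨p, ⟨-, hpa⟩, hWp⟩ := hXY.exists_mem_level_of_mem_chains hWch
    exact ⟨p, by omega, hWp, by omega, fun _ => hWch⟩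

lemma unionFree_levels_union_chains_sdiff (hI : I ⊆ Icc 1 (famHeight F))
    (hind : ∀ x ∈ I, ∀ y ∈ I, ¬ HEdge F x y) (ha : a ∈ I) (hamin : ∀ x ∈ I, a ≤ x)
    (hXY : EdgeChains F b a X Y) :
    UnionFree ((I.biUnion (level F) ∪ ((Ico b a).image X ∪ (Ico b a).image Y)) \
      (level F a ∩ image₂ (· ∪ ·) ((Ico b a).image X) ((Ico b a).image Y))) := by
  intro A hA B hB C hC hAB hAC hBC hABC
  rw [mem_sdiff] at hA hB hC
  obtain ⟨rA, -, hrA, hrA_I, hrA_ch⟩ :=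
    exists_level_of_mem_levels_union_chains hI ha hamin hXY hA.1
  obtain ⟨rB, -, hrB, hrB_I, hrB_ch⟩ :=
    exists_level_of_mem_levels_union_chains hI ha hamin hXY hB.1
  obtain ⟨rC, hrCt, hrC, hrC_I, -⟩ :=
    exists_level_of_mem_levels_union_chains hI ha hamin hXY hC.1
  have hAC' : rA < rC :=
    level_lt_of_ssubset hrA hrC (ssubset_of_subset_of_ne (hABC ▸ subset_union_left) hAC)
  have hBC' : rB < rC :=
    level_lt_of_ssubset hrB hrC (ssubset_of_subset_of_ne (hABC ▸ subset_union_right) hBC)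
  have no_edge : ∀ m ∈ I, rA ≤ m → rB ≤ m → m < rC → False := fun m hm hmA hmB hmC =>
    hind m hm rC (hrC_I (by have := hamin m hm; omega))
      (hEdge_of_union_eq hrA hrB hrC hABC (mem_Icc.1 (hI hm)).1 hmA hmB hmC hrCt)
  by_cases hhigh : a ≤ max rA rB
  · rcases le_total rA rB with h | h
    · exact no_edge rB (hrB_I (by omega)) h le_rfl hBC'
    · exact no_edge rA (hrA_I (by omega)) le_rfl h hAC'
  rw [not_le, max_lt_iff] at hhigh
  have same_chain : ∀ {Z : ℕ → Finset ℕ}, StrictMonoOn Z (Set.Ico b a) →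
      A ∈ (Ico b a).image Z → B ∈ (Ico b a).image Z → False := fun hZ hAZ hBZ =>
    (union_eq_left_or_right_of_mem_image (by rw [coe_Ico]; exact hZ.monotoneOn) hAZ hBZ).elim
      (fun h => hAC (h.symm.trans hABC)) (fun h => hBC (h.symm.trans hABC))
  have mixed : ∀ {A' B'}, A' ∈ (Ico b a).image X → B' ∈ (Ico b a).image Y → A' ∪ B' = C →
      False := fun hA' hB' hC' => by
    have hC₂ : C ∈ image₂ (· ∪ ·) ((Ico b a).image X) ((Ico b a).image Y) :=
      hC' ▸ mem_image₂_of_mem hA' hB'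
    have := hXY.lt_of_mem_image₂ hC₂ (fun h => hC.2 (mem_inter.2 ⟨h, hC₂⟩)) hrC hrCt
    exact no_edge a ha hhigh.1.le hhigh.2.le this
  rcases mem_union.1 (hrA_ch hhigh.1) with hAX | hAY <;>
    rcases mem_union.1 (hrB_ch hhigh.2) with hBX | hBY
  · exact same_chain hXY.strictMonoOn_left hAX hBX
  · exact mixed hAX hBY hABC
  · exact mixed hBX hAY (union_comm B A ▸ hABC)
  · exact same_chain hXY.strictMonoOn_right hAY hBY

lemma card_levels_union_chains (hI : I ⊆ Icc 1 (famHeight F)) (ha : a ∈ I)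
    (hamin : ∀ x ∈ I, a ≤ x) (hXY : EdgeChains F b a X Y) :
    #(I.biUnion (level F) ∪ ((Ico b a).image X ∪ (Ico b a).image Y)) =
      ∑ j ∈ I, #(level F j) + 2 * (a - b) := by
  have hat := (mem_Icc.1 (hI ha)).2
  have hX : #((Ico b a).image X) = a - b := by
    rw [card_image_of_injOn (by rw [coe_Ico]; exact hXY.strictMonoOn_left.injOn), Nat.card_Ico]
  have hY : #((Ico b a).image Y) = a - b := by
    rw [card_image_of_injOn (by rw [coe_Ico]; exact hXY.strictMonoOn_right.injOn), Nat.card_Ico]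
  have hXY_disj : Disjoint ((Ico b a).image X) ((Ico b a).image Y) := by
    refine disjoint_left.2 fun W hWX hWY => ?_
    obtain ⟨p, hp, rfl⟩ := mem_image.1 hWX
    obtain ⟨q, hq, hqp⟩ := mem_image.1 hWY
    exact hXY.left_ne_right p (mem_Ico.1 hp) q (mem_Ico.1 hq) hqp.symm
  have hI_disj : Disjoint (I.biUnion (level F)) ((Ico b a).image X ∪ (Ico b a).image Y) := by
    refine disjoint_left.2 fun W hWI hWch => ?_
    obtain ⟨r, hr, hWr⟩ := mem_biUnion.1 hWI
    obtain ⟨p, ⟨-, hpa⟩, hWp⟩ := hXY.exists_mem_level_of_mem_chains hWch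
    have := eq_of_mem_level hWr hWp (mem_Icc.1 (hI hr)).2 (by omega)
    have := hamin r hr
    omega
  have hlevels : (I : Set ℕ).PairwiseDisjoint (level F) := fun x hx y hy hxy =>
    disjoint_left.2 fun W hWx hWy =>
      hxy (eq_of_mem_level hWx hWy (mem_Icc.1 (hI hx)).2 (mem_Icc.1 (hI hy)).2)
  rw [card_union_of_disjoint hI_disj, card_union_of_disjoint hXY_disj, card_biUnion hlevels,
    hX, hY]
  ring

lemma card_chain_unions_le_one (hXY : EdgeChains F b a X Y) :
    #(level F a ∩ image₂ (· ∪ ·) ((Ico b a).image X) ((Ico b a).image Y)) ≤ 1 := by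
  refine card_le_one.2 fun U hU V hV => ?_
  simp only [mem_inter, mem_image₂, mem_image] at hU hV
  obtain ⟨hU, _, ⟨p₁, hp₁, rfl⟩, _, ⟨q₁, hq₁, rfl⟩, rfl⟩ := hU
  obtain ⟨hV, _, ⟨p₂, hp₂, rfl⟩, _, ⟨q₂, hq₂, rfl⟩, rfl⟩ := hV
  exact hXY.union_eq_of_mem_level p₁ (mem_Ico.1 hp₁) q₁ (mem_Ico.1 hq₁) p₂ (mem_Ico.1 hp₂)
    q₂ (mem_Ico.1 hq₂) hU hV

end Family

theorem sum_levels_indep_le_of_edge_general (F : Finset (Finset ℕ)) (α : ℕ)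
    (hα : IsGreatest {k | ∃ G ⊆ F, UnionFree G ∧ G.card = k} α)
    (I : Finset ℕ) (hI : I ⊆ Finset.Icc 1 (famHeight F))
    (hind : ∀ x ∈ I, ∀ y ∈ I, ¬ HEdge F x y)
    (a₁ : ℕ) (ha₁ : a₁ ∈ I) (ha₁min : ∀ x ∈ I, a₁ ≤ x)
    (b : ℕ) (hedge : HEdge F b a₁) :
    ((∑ j ∈ I, (level F j).card : ℤ)) ≤ (α : ℤ) - 2 * ((a₁ : ℤ) - (b : ℤ)) + 1 := by
  obtain ⟨-, hba, -, X, Y, hXY⟩ := hEdge_iff.1 hedge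
  set family := I.biUnion (level F) ∪ ((Ico b a₁).image X ∪ (Ico b a₁).image Y)
  set removed := level F a₁ ∩ image₂ (· ∪ ·) ((Ico b a₁).image X) ((Ico b a₁).image Y)
  have hsub : family \ removed ⊆ F := fun W hW =>
    have ⟨_, _, hW, _⟩ :=
      exists_level_of_mem_levels_union_chains hI ha₁ ha₁min hXY (mem_sdiff.1 hW).1
    level_subset hW
  have hα_ge := hα.2 ⟨_, hsub, unionFree_levels_union_chains_sdiff hI hind ha₁ ha₁min hXY, rfl⟩
  have hremoved : #removed ≤ 1 := card_chain_unions_le_one hXY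
  have hfamily : #family = _ := card_levels_union_chains hI ha₁ ha₁min hXY
  have hsdiff := le_card_sdiff removed family
  rw [← Nat.cast_sum]
  omega

/-- Second part of Lemma 2: let `α` be the size of the largest union-free subfamily
of `F`, let `a₁ < a₂ < ⋯ < a_k` be the vertices of an independent set `I` in the
auxiliary graph `H` (so `a₁` is the least element of `I`), and suppose `(b, a₁)` is
an edge of `H` with `b < a₁`.  Then `∑_{j ∈ I} |𝓕_j| ≤ α - 2(a₁ - b) + 1`. -/
theorem sum_levels_indep_le_of_edge (F : Finset (Finset ℕ)) (α : ℕ)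
    (hα : IsGreatest {k | ∃ G ⊆ F, UnionFree G ∧ G.card = k} α)
    (I : Finset ℕ) (hI : I ⊆ Finset.Icc 1 (famHeight F))
    (hind : ∀ x ∈ I, ∀ y ∈ I, ¬ HEdge F x y)
    (a₁ : ℕ) (ha₁ : a₁ ∈ I) (ha₁min : ∀ x ∈ I, a₁ ≤ x)
    (b : ℕ) (hb : b < a₁) (hedge : HEdge F b a₁) :
    ((∑ j ∈ I, (level F j).card : ℤ)) ≤ (α : ℤ) - 2 * ((a₁ : ℤ) - (b : ℤ)) + 1 :=
  sum_levels_indep_le_of_edge_general F α hα I hI hind a₁ ha₁ ha₁min b hedge
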